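/- Let ϑ: C[X₁]×C[X₂] → (0,∞) be Borel with ϑ ∈ L^p(α) for α ∈ M+(C[X₁]×C[X₂]), and define dil_{ϑ,p}(α) as the pushforward of ϑ^p·α under the map (y₁,y₂) ↦ (ϑ⁻¹y₁, ϑ⁻¹y₂), where λ·[x,r]=[x,λr]. Then the p-homogeneous marginals are preserved: h_i^p(dil_{ϑ,p}(α)) = h_i^p(α) for i = 1,2. -/

import Mathlib

open MeasureTheory Topology Filter Set
open scoped NNReal ENNReal BoundedContinuousFunction

noncomputable section

namespace UOT

variable (X : Type*)

/-- The equivalence relation on `X × ℝ≥0` identifying all points with radius `0`. -/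
def coneSetoid : Setoid (X × ℝ≥0) where
  r p q := p = q ∨ (p.2 = 0 ∧ q.2 = 0)
  iseqv := by
    refine ⟨fun p => Or.inl rfl, ?_, ?_⟩
    · rintro p q (rfl | h)
      · exact Or.inl rfl
      · exact Or.inr ⟨h.2, h.1⟩
    · rintro p q r hpq hqr
      rcases hpq with rfl | h
      · exact hqr
      · rcases hqr with rfl | h'
        · exact Or.inr h
        · exact Or.inr ⟨h.1, h'.2⟩

/-- The geometric cone over `X`. -/
def Cone := Quotient (coneSetoid X)

/-- The canonical map sending `(x, r)` to the point `[x, r]` of the cone. -/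
def Cone.mk (x : X) (r : ℝ≥0) : Cone X := Quotient.mk (coneSetoid X) (x, r)

/-- The vertex `o` of the cone. -/
def Cone.vertex [Nonempty X] : Cone X := Cone.mk X (Classical.arbitrary X) 0

/-- The radial coordinate `r` of a point of the cone. -/
def Cone.radius : Cone X → ℝ≥0 :=
  Quotient.lift (fun p => p.2) (by
    rintro p q (rfl | ⟨h1, h2⟩)
    · rfl
    · simp [h1, h2])

/-- The base point `x` of a point of the cone (an arbitrary point of `X` at the vertex). -/
def Cone.basePt [Nonempty X] : Cone X → X :=
  Quotient.lift (fun p => if p.2 = 0 then Classical.arbitrary X else p.1) (by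
    rintro p q (rfl | ⟨h1, h2⟩)
    · rfl
    · simp [h1, h2])

/-- Radial rescaling `λ • [x, r] = [x, λ * r]` on the cone. -/
def Cone.smul (c : ℝ≥0) : Cone X → Cone X :=
  Quotient.lift (fun p => Cone.mk X p.1 (c * p.2)) (by
    rintro p q (rfl | ⟨h1, h2⟩)
    · rfl
    · apply Quotient.sound
      exact Or.inr ⟨by simp [h1], by simp [h2]⟩)

variable [TopologicalSpace X]

/-- The cone topology: a set is open iff its preimage in `X × ℝ≥0` is open and, when it
contains the vertex, it contains a whole strip `{[x, r] : r < ε}`. -/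
instance : TopologicalSpace (Cone X) where
  IsOpen U := IsOpen ((fun p : X × ℝ≥0 => Cone.mk X p.1 p.2) ⁻¹' U) ∧
      ∀ x : X, Cone.mk X x 0 ∈ U →
        ∃ ε : ℝ≥0, 0 < ε ∧ ∀ (y : X) (r : ℝ≥0), r < ε → Cone.mk X y r ∈ U
  isOpen_univ := ⟨isOpen_univ, fun _ _ => ⟨1, one_pos, fun _ _ _ => mem_univ _⟩⟩
  isOpen_inter := by
    rintro s t ⟨hs1, hs2⟩ ⟨ht1, ht2⟩
    refine ⟨hs1.inter ht1, fun x hx => ?_⟩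
    obtain ⟨ε₁, hε₁, h₁⟩ := hs2 x hx.1
    obtain ⟨ε₂, hε₂, h₂⟩ := ht2 x hx.2
    exact ⟨min ε₁ ε₂, lt_min hε₁ hε₂, fun y r hr =>
      ⟨h₁ y r (hr.trans_le (min_le_left _ _)), h₂ y r (hr.trans_le (min_le_right _ _))⟩⟩
  isOpen_sUnion := by
    intro S hS
    constructor
    · rw [Set.preimage_sUnion]
      exact isOpen_biUnion fun t ht => (hS t ht).1
    · intro x hx
      obtain ⟨t, ht, hxt⟩ := hx
      obtain ⟨ε, hε, h⟩ := (hS t ht).2 x hxt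
      exact ⟨ε, hε, fun y r hr => ⟨t, ht, h y r hr⟩⟩

instance : MeasurableSpace (Cone X) := borel (Cone X)

instance : BorelSpace (Cone X) := ⟨rfl⟩

/-- On a product of cones we use the Borel σ-algebra of the product topology. -/
instance (priority := 2000) prodConeMeasurableSpace (X₁ X₂ : Type*) [TopologicalSpace X₁]
    [TopologicalSpace X₂] : MeasurableSpace (Cone X₁ × Cone X₂) :=
  borel (Cone X₁ × Cone X₂)

instance (priority := 2000) prodConeBorelSpace (X₁ X₂ : Type*) [TopologicalSpace X₁]
    [TopologicalSpace X₂] : BorelSpace (Cone X₁ × Cone X₂) := ⟨rfl⟩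

variable {X}

/-- The scaled Dirac measure `r • δ_x` as a finite measure. -/
def diracFM {Y : Type*} [MeasurableSpace Y] (x : Y) : FiniteMeasure Y :=
  ⟨Measure.dirac x, inferInstance⟩

/-- The canonical map `[x, r] ↦ r • δ_x` from the cone to finite measures. -/
def coneToFM (X : Type*) [TopologicalSpace X] [MeasurableSpace X] :
    Cone X → FiniteMeasure X :=
  Quotient.lift (fun p : X × ℝ≥0 => p.2 • diracFM p.1) (by
    rintro p q (rfl | ⟨h1, h2⟩)
    · rfl
    · simp [h1, h2])

/-- A finite measure is discrete if it is a finite nonnegative combination of Dirac masses. -/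
def IsDiscreteFM {Y : Type*} [MeasurableSpace Y] (μ : FiniteMeasure Y) : Prop :=
  ∃ (n : ℕ) (c : Fin n → ℝ≥0) (x : Fin n → Y), μ = ∑ i, c i • diracFM (x i)

section Product

variable {X₁ X₂ : Type*} [TopologicalSpace X₁] [TopologicalSpace X₂]

/-- Radial `1`-homogeneity of a cost function on the product cone. -/
def RadiallyHomogeneous (H : Cone X₁ × Cone X₂ → ℝ≥0∞) : Prop :=
  ∀ (x₁ : X₁) (x₂ : X₂) (r₁ r₂ lam : ℝ≥0), 0 < lam →
    H (Cone.mk X₁ x₁ (lam * r₁), Cone.mk X₂ x₂ (lam * r₂)) =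
      (lam : ℝ≥0∞) * H (Cone.mk X₁ x₁ r₁, Cone.mk X₂ x₂ r₂)

/-- Radial convexity of a cost function on the product cone: every radial section is convex. -/
def RadiallyConvex (H : Cone X₁ × Cone X₂ → ℝ≥0∞) : Prop :=
  ∀ (x₁ : X₁) (x₂ : X₂) (a₁ a₂ b₁ b₂ t : ℝ≥0), t ≤ 1 →
    H (Cone.mk X₁ x₁ (t * a₁ + (1 - t) * b₁), Cone.mk X₂ x₂ (t * a₂ + (1 - t) * b₂)) ≤
      (t : ℝ≥0∞) * H (Cone.mk X₁ x₁ a₁, Cone.mk X₂ x₂ a₂) +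
        ((1 - t : ℝ≥0) : ℝ≥0∞) * H (Cone.mk X₁ x₁ b₁, Cone.mk X₂ x₂ b₂)

/-- Properness: `H` is not identically `+∞`. -/
def ProperCost (H : Cone X₁ × Cone X₂ → ℝ≥0∞) : Prop := ∃ y, H y ≠ ⊤

variable [MeasurableSpace X₁] [MeasurableSpace X₂]

/-- First `p`-homogeneous marginal `h₁^p(α) = (x₁)_♯ (r₁^p · α)`. -/
def homMarginalFst [Nonempty X₁] (p : ℝ) (α : Measure (Cone X₁ × Cone X₂)) : Measure X₁ :=
  Measure.map (fun y : Cone X₁ × Cone X₂ => Cone.basePt X₁ y.1)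
    (α.withDensity fun y => (Cone.radius X₁ y.1 : ℝ≥0∞) ^ p)

/-- Second `p`-homogeneous marginal `h₂^p(α) = (x₂)_♯ (r₂^p · α)`. -/
def homMarginalSnd [Nonempty X₂] (p : ℝ) (α : Measure (Cone X₁ × Cone X₂)) : Measure X₂ :=
  Measure.map (fun y : Cone X₁ × Cone X₂ => Cone.basePt X₂ y.2)
    (α.withDensity fun y => (Cone.radius X₂ y.2 : ℝ≥0∞) ^ p)

variable [Nonempty X₁] [Nonempty X₂]

/-- `α ∈ H^p(μ₁, μ₂)`: a (finite Radon) homogeneous coupling with finite `p`-th radial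
moments and `p`-homogeneous marginals `μ₁, μ₂`. -/
def IsHomCoupling (p : ℝ) (α : Measure (Cone X₁ × Cone X₂))
    (μ₁ : Measure X₁) (μ₂ : Measure X₂) : Prop :=
  IsFiniteMeasure α ∧
    (∫⁻ y, ((Cone.radius X₁ y.1 : ℝ≥0∞) ^ p + (Cone.radius X₂ y.2 : ℝ≥0∞) ^ p) ∂α) ≠ ⊤ ∧
    homMarginalFst p α = μ₁ ∧ homMarginalSnd p α = μ₂

/-- The unbalanced optimal transport cost `U_H`. -/
def UH (H : Cone X₁ × Cone X₂ → ℝ≥0∞) (μ₁ : Measure X₁) (μ₂ : Measure X₂) : ℝ≥0∞ :=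
  ⨅ (α : Measure (Cone X₁ × Cone X₂)) (_ : IsHomCoupling 1 α μ₁ μ₂), ∫⁻ y, H y ∂α

/-- The truncated product cone `C_R[X₁, X₂]`: both radii at most `R`. -/
def prodConeTrunc (R : ℝ≥0) : Set (Cone X₁ × Cone X₂) :=
  {y | Cone.radius X₁ y.1 ≤ R ∧ Cone.radius X₂ y.2 ≤ R}

/-- Membership of a pair of bounded continuous potentials in the dual constraint set `Φ_H`. -/
def InPhi (H : Cone X₁ × Cone X₂ → ℝ≥0∞) (φ₁ : X₁ →ᵇ ℝ) (φ₂ : X₂ →ᵇ ℝ) : Prop :=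
  ∀ (x₁ : X₁) (x₂ : X₂) (r₁ r₂ : ℝ≥0),
    ENNReal.ofReal (φ₁ x₁ * r₁ + φ₂ x₂ * r₂) ≤ H (Cone.mk X₁ x₁ r₁, Cone.mk X₂ x₂ r₂)

/-- `H`-cyclical monotonicity of a subset of the product cone. -/
def HCyclicallyMonotone (H : Cone X₁ × Cone X₂ → ℝ≥0∞)
    (Γ : Set (Cone X₁ × Cone X₂)) : Prop :=
  ∀ (N : ℕ) (y : Fin N → Cone X₁ × Cone X₂), (∀ i, y i ∈ Γ) → ∀ σ : Equiv.Perm (Fin N),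
    ∑ i, H (y i) ≤ ∑ i, H ((y i).1, (y (σ i)).2)

/-- A radial convex cone in the product cone. -/
def IsRadialConvexCone (Γ : Set (Cone X₁ × Cone X₂)) : Prop :=
  ∀ (x₁ : X₁) (x₂ : X₂) (a₁ a₂ b₁ b₂ lam mu : ℝ≥0),
    (Cone.mk X₁ x₁ a₁, Cone.mk X₂ x₂ a₂) ∈ Γ → (Cone.mk X₁ x₁ b₁, Cone.mk X₂ x₂ b₂) ∈ Γ →
      (Cone.mk X₁ x₁ (lam * a₁ + mu * b₁), Cone.mk X₂ x₂ (lam * a₂ + mu * b₂)) ∈ Γ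

end Product

/-- Convexity (with scalars in `ℝ≥0`) of an `ℝ≥0∞`-valued function on a module. -/
def ConvexENN {E : Type*} [AddCommMonoid E] [SMul ℝ≥0 E] (f : E → ℝ≥0∞) : Prop :=
  ∀ (a b : E) (t : ℝ≥0), t ≤ 1 →
    f (t • a + (1 - t) • b) ≤ (t : ℝ≥0∞) * f a + ((1 - t : ℝ≥0) : ℝ≥0∞) * f b

/-- The lower semicontinuous convex envelope: the largest lsc convex function below `F`. -/
def lscConvexHull {E : Type*} [TopologicalSpace E] [AddCommMonoid E] [SMul ℝ≥0 E]
    (F : E → ℝ≥0∞) : E → ℝ≥0∞ :=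
  fun e => ⨆ (g : E → ℝ≥0∞) (_ : LowerSemicontinuous g ∧ ConvexENN g ∧ g ≤ F), g e

/-- The convex envelope: the largest convex function below `F`. -/
def convexHullFn {E : Type*} [AddCommMonoid E] [SMul ℝ≥0 E] (F : E → ℝ≥0∞) : E → ℝ≥0∞ :=
  fun e => ⨆ (g : E → ℝ≥0∞) (_ : ConvexENN g ∧ g ≤ F), g e

/-- The lower semicontinuous envelope: the largest lsc function below `F`. -/
def lscHull {E : Type*} [TopologicalSpace E] (F : E → ℝ≥0∞) : E → ℝ≥0∞ :=
  fun e => ⨆ (g : E → ℝ≥0∞) (_ : LowerSemicontinuous g ∧ g ≤ F), g e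

end UOT
namespace UOT

/-- The dilation `dil_{ϑ,p}(α)`: push forward `ϑ^p · α` under the radial rescaling
`(y₁, y₂) ↦ (ϑ⁻¹ • y₁, ϑ⁻¹ • y₂)`. -/
def dil {X₁ X₂ : Type*} [TopologicalSpace X₁] [TopologicalSpace X₂]
    (p : ℝ) (ϑ : Cone X₁ × Cone X₂ → ℝ≥0) (α : Measure (Cone X₁ × Cone X₂)) :
    Measure (Cone X₁ × Cone X₂) :=
  Measure.map (fun y => (Cone.smul X₁ (ϑ y)⁻¹ y.1, Cone.smul X₂ (ϑ y)⁻¹ y.2))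
    (α.withDensity fun y => (ϑ y : ℝ≥0∞) ^ p)

section DilAux

variable {X : Type*} [TopologicalSpace X]

lemma Cone.isOpen_iff (U : Set (Cone X)) :
    IsOpen U ↔ IsOpen ((fun p : X × ℝ≥0 => Cone.mk X p.1 p.2) ⁻¹' U) ∧
      ∀ x : X, Cone.mk X x 0 ∈ U →
        ∃ ε : ℝ≥0, 0 < ε ∧ ∀ (y : X) (r : ℝ≥0), r < ε → Cone.mk X y r ∈ U :=
  Iff.rfl

lemma Cone.continuous_mk : Continuous (fun p : X × ℝ≥0 => Cone.mk X p.1 p.2) :=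
  continuous_def.mpr fun U hU => ((Cone.isOpen_iff U).mp hU).1

@[simp] lemma Cone.radius_mk (x : X) (r : ℝ≥0) : Cone.radius X (Cone.mk X x r) = r := rfl

@[simp] lemma Cone.basePt_mk [Nonempty X] (x : X) (r : ℝ≥0) :
    Cone.basePt X (Cone.mk X x r) = if r = 0 then Classical.arbitrary X else x := rfl

lemma Cone.smul_mk (c : ℝ≥0) (x : X) (r : ℝ≥0) :
    Cone.smul X c (Cone.mk X x r) = Cone.mk X x (c * r) := rfl

lemma Cone.mk_surjective : ∀ z : Cone X, ∃ x r, z = Cone.mk X x r := by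
  intro z
  induction z using Quotient.ind with
  | _ p => exact ⟨p.1, p.2, rfl⟩

lemma Cone.continuous_radius : Continuous (Cone.radius X) := by
  rw [continuous_def]
  intro U hU
  rw [Cone.isOpen_iff]
  constructor
  · have h : (fun p : X × ℝ≥0 => Cone.mk X p.1 p.2) ⁻¹' (Cone.radius X ⁻¹' U) =
      Prod.snd ⁻¹' U := rfl
    rw [h]
    exact continuous_snd.isOpen_preimage U hU
  · intro x hx
    have h0 : (0 : ℝ≥0) ∈ U := hx
    obtain ⟨ε, hε, hball⟩ := Metric.isOpen_iff.mp hU 0 h0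
    refine ⟨ε.toNNReal, Real.toNNReal_pos.mpr hε, fun y r hr => ?_⟩
    apply hball
    have hr' : (r : ℝ) < ε := by
      calc (r : ℝ) < (ε.toNNReal : ℝ) := NNReal.coe_lt_coe.mpr hr
      _ = ε := Real.coe_toNNReal ε hε.le
    simpa [Metric.mem_ball, NNReal.dist_eq] using hr'

lemma Cone.basePt_of_radius_eq_zero [Nonempty X] {z : Cone X}
    (h : Cone.radius X z = 0) : Cone.basePt X z = Classical.arbitrary X := by
  obtain ⟨x, r, rfl⟩ := Cone.mk_surjective z
  rw [Cone.radius_mk] at h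
  simp [h]

lemma Cone.isOpen_basePt_preimage [Nonempty X] {B : Set X} (hB : IsOpen B) :
    IsOpen (Cone.basePt X ⁻¹' B ∩ {z | Cone.radius X z ≠ 0}) := by
  rw [Cone.isOpen_iff]
  constructor
  · have h : (fun p : X × ℝ≥0 => Cone.mk X p.1 p.2) ⁻¹'
        (Cone.basePt X ⁻¹' B ∩ {z | Cone.radius X z ≠ 0}) =
        B ×ˢ {r : ℝ≥0 | r ≠ 0} := by
      ext ⟨x, r⟩
      by_cases h : r = 0 <;>
        simp [Set.mem_prod, Cone.basePt_mk, Cone.radius_mk, h]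
    rw [h]
    exact hB.prod isOpen_ne
  · intro x hx
    exact absurd (Cone.radius_mk x 0) hx.2

lemma Cone.continuousOn_basePt [Nonempty X] :
    ContinuousOn (Cone.basePt X) {z | Cone.radius X z ≠ 0} := by
  rw [continuousOn_iff']
  intro B hB
  exact ⟨_, Cone.isOpen_basePt_preimage hB, by rw [Set.inter_assoc, Set.inter_self]⟩

lemma Cone.measurable_basePt [MeasurableSpace X] [BorelSpace X] [Nonempty X] :
    Measurable (Cone.basePt X) := by
  have hV : MeasurableSet {z : Cone X | Cone.radius X z ≠ 0} := by
    have : {z : Cone X | Cone.radius X z ≠ 0} = (Cone.radius X ⁻¹' {0})ᶜ := rfl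
    rw [this]
    exact ((Cone.continuous_radius (X := X)).measurable (measurableSet_singleton 0)).compl
  have key : ∀ s : Set X, MeasurableSet s →
      MeasurableSet (Cone.basePt X ⁻¹' s ∩ {z | Cone.radius X z ≠ 0}) := by
    intro s hs
    refine MeasurableSet.induction_on_open
      (C := fun s _ => MeasurableSet
        (Cone.basePt X ⁻¹' s ∩ {z | Cone.radius X z ≠ 0})) ?_ ?_ ?_ s hs
    · intro U hU
      exact (Cone.isOpen_basePt_preimage hU).measurableSet
    · intro t ht iht
      have h : Cone.basePt X ⁻¹' tᶜ ∩ {z | Cone.radius X z ≠ 0} =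
            {z : Cone X | Cone.radius X z ≠ 0} \
              (Cone.basePt X ⁻¹' t ∩ {z | Cone.radius X z ≠ 0}) := by
          ext z
          simp only [Set.mem_inter_iff, Set.mem_preimage, Set.mem_compl_iff,
            Set.mem_setOf_eq, Set.mem_diff]
          tauto
      rw [h]
      exact hV.diff iht
    · intro f hd hf ihf
      rw [Set.preimage_iUnion, Set.iUnion_inter]
      exact MeasurableSet.iUnion ihf
  intro B hB
  by_cases harb : Classical.arbitrary X ∈ B
  · have h : Cone.basePt X ⁻¹' B =
        (Cone.basePt X ⁻¹' B ∩ {z | Cone.radius X z ≠ 0}) ∪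
          {z : Cone X | Cone.radius X z ≠ 0}ᶜ := by
      ext z
      constructor
      · intro hz
        by_cases h : Cone.radius X z = 0
        · exact Or.inr (by simpa using h)
        · exact Or.inl ⟨hz, h⟩
      · rintro (⟨hz, _⟩ | hz)
        · exact hz
        · have h0 : Cone.radius X z = 0 := by simpa using hz
          simpa [Set.mem_preimage, Cone.basePt_of_radius_eq_zero h0] using harb
    rw [h]
    exact (key B hB).union hV.compl
  · have h : Cone.basePt X ⁻¹' B =
        Cone.basePt X ⁻¹' B ∩ {z | Cone.radius X z ≠ 0} := by
      ext z
      constructor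
      · intro hz
        refine ⟨hz, fun h0 => harb ?_⟩
        have hz' : Cone.basePt X z ∈ B := hz
        rwa [Cone.basePt_of_radius_eq_zero h0] at hz'
      · exact fun h => h.1
    rw [h]
    exact key B hB

lemma Cone.smul_eq_mk' [Nonempty X] (c : ℝ≥0) (z : Cone X) :
    Cone.smul X c z = Cone.mk X (Cone.basePt X z) (c * Cone.radius X z) := by
  obtain ⟨x, r, rfl⟩ := Cone.mk_surjective z
  rw [Cone.smul_mk, Cone.radius_mk, Cone.basePt_mk]
  by_cases h : r = 0
  · rw [if_pos h, h, mul_zero]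
    exact Quotient.sound (Or.inr ⟨rfl, rfl⟩)
  · rw [if_neg h]

lemma Cone.radius_smul (c : ℝ≥0) (z : Cone X) :
    Cone.radius X (Cone.smul X c z) = c * Cone.radius X z := by
  obtain ⟨x, r, rfl⟩ := Cone.mk_surjective z
  rfl

lemma Cone.basePt_smul [Nonempty X] {c : ℝ≥0} (hc : c ≠ 0) (z : Cone X) :
    Cone.basePt X (Cone.smul X c z) = Cone.basePt X z := by
  obtain ⟨x, r, rfl⟩ := Cone.mk_surjective z
  rw [Cone.smul_mk, Cone.basePt_mk, Cone.basePt_mk]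
  by_cases h : r = 0
  · simp [h]
  · rw [if_neg h, if_neg (mul_ne_zero hc h)]

lemma Cone.continuous_smul_pair [Nonempty X] :
    Continuous (fun q : Cone X × ℝ≥0 => Cone.smul X q.2 q.1) := by
  rw [continuous_iff_continuousAt]
  rintro ⟨z₀, c₀⟩
  by_cases h0 : c₀ * Cone.radius X z₀ = 0
  · -- the image is the vertex; use the strip condition
    rw [continuousAt_def]
    intro U hU
    obtain ⟨U', hU'sub, hU'open, hmem⟩ := mem_nhds_iff.mp hU
    have hmem' : Cone.mk X (Cone.basePt X z₀) 0 ∈ U' := by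
      rw [Cone.smul_eq_mk', h0] at hmem
      exact hmem
    obtain ⟨ε, hε, hstrip⟩ := ((Cone.isOpen_iff U').mp hU'open).2 _ hmem'
    -- choose a box {radius < A} × {c < B} with A * B ≤ ε containing (z₀, c₀)
    obtain ⟨A, B, hA, hB, hAB, hzA, hcB⟩ :
        ∃ A B : ℝ≥0, 0 < A ∧ 0 < B ∧ B * A ≤ ε ∧
          Cone.radius X z₀ < A ∧ c₀ < B := by
      rcases mul_eq_zero.mp h0 with hc | hr
      · refine ⟨Cone.radius X z₀ + 1, ε / (Cone.radius X z₀ + 1), by positivity,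
          by positivity, le_of_eq (div_mul_cancel₀ ε (by positivity)), ?_, ?_⟩
        · exact lt_add_of_pos_right _ one_pos
        · rw [hc]; positivity
      · refine ⟨ε / (c₀ + 1), c₀ + 1, by positivity, by positivity,
          le_of_eq (mul_div_cancel₀ ε (by positivity)), ?_, ?_⟩
        · rw [hr]; positivity
        · exact lt_add_of_pos_right _ one_pos
    refine mem_nhds_iff.mpr
      ⟨{q : Cone X × ℝ≥0 | Cone.radius X q.1 < A ∧ q.2 < B}, ?_, ?_, hzA, hcB⟩
    · intro q hq
      apply hU'sub
      have hlt : q.2 * Cone.radius X q.1 < ε :=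
        lt_of_lt_of_le (mul_lt_mul' hq.2.le hq.1 zero_le hB) hAB
      show Cone.smul X q.2 q.1 ∈ U'
      rw [Cone.smul_eq_mk']
      exact hstrip _ _ hlt
    · exact ((isOpen_Iio.preimage (Cone.continuous_radius.comp continuous_fst)).inter
        (isOpen_Iio.preimage continuous_snd))
  · -- away from the vertex, use the explicit formula
    have hr0 : Cone.radius X z₀ ≠ 0 := fun h => h0 (by rw [h, mul_zero])
    have hfun : (fun q : Cone X × ℝ≥0 => Cone.smul X q.2 q.1) =
        fun q : Cone X × ℝ≥0 =>
          Cone.mk X (Cone.basePt X q.1) (q.2 * Cone.radius X q.1) :=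
      funext fun q => Cone.smul_eq_mk' q.2 q.1
    rw [hfun]
    have hW : IsOpen {q : Cone X × ℝ≥0 | Cone.radius X q.1 ≠ 0} := by
      have : {q : Cone X × ℝ≥0 | Cone.radius X q.1 ≠ 0} =
          Prod.fst ⁻¹' {z : Cone X | Cone.radius X z ≠ 0} := rfl
      rw [this]
      exact (isOpen_ne_fun Cone.continuous_radius continuous_const).preimage
        continuous_fst
    have hcont : ContinuousOn
        (fun q : Cone X × ℝ≥0 =>
          Cone.mk X (Cone.basePt X q.1) (q.2 * Cone.radius X q.1))
        {q : Cone X × ℝ≥0 | Cone.radius X q.1 ≠ 0} := by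
      have hpair : ContinuousOn
          (fun q : Cone X × ℝ≥0 => (Cone.basePt X q.1, q.2 * Cone.radius X q.1))
          {q : Cone X × ℝ≥0 | Cone.radius X q.1 ≠ 0} := by
        apply ContinuousOn.prodMk
        · exact Cone.continuousOn_basePt.comp continuous_fst.continuousOn
            (fun q hq => hq)
        · exact (continuous_snd.mul
            (Cone.continuous_radius.comp continuous_fst)).continuousOn
      exact Cone.continuous_mk.comp_continuousOn hpair
    exact hcont.continuousAt (hW.mem_nhds hr0)

end DilAux

section DilMain

variable {X₁ X₂ : Type*} [TopologicalSpace X₁] [TopologicalSpace X₂]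
  [Nonempty X₁] [Nonempty X₂]

lemma measurable_dilMap (ϑ : Cone X₁ × Cone X₂ → ℝ≥0) (hmeas : Measurable ϑ) :
    Measurable (fun y : Cone X₁ × Cone X₂ =>
      (Cone.smul X₁ (ϑ y)⁻¹ y.1, Cone.smul X₂ (ϑ y)⁻¹ y.2)) := by
  have hH : Continuous (fun q : (Cone X₁ × Cone X₂) × ℝ≥0 =>
      (Cone.smul X₁ q.2 q.1.1, Cone.smul X₂ q.2 q.1.2)) := by
    apply Continuous.prodMk
    · exact (Cone.continuous_smul_pair (X := X₁)).comp
        ((continuous_fst.comp continuous_fst).prodMk continuous_snd)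
    · exact (Cone.continuous_smul_pair (X := X₂)).comp
        ((continuous_snd.comp continuous_fst).prodMk continuous_snd)
  have hG : Measurable (fun y : Cone X₁ × Cone X₂ => (y, (ϑ y)⁻¹)) :=
    measurable_id.prodMk hmeas.inv
  exact hH.measurable.comp hG

end DilMain

/-- For a Borel `ϑ : C[X₁]×C[X₂] → (0,∞)` in `L^p(α)`, the dilation
`dil_{ϑ,p}(α)` has the same `p`-homogeneous marginals as `α`. -/
theorem dilation_preserves_homogeneous_marginals
    {X₁ X₂ : Type*} [TopologicalSpace X₁] [TopologicalSpace X₂]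
    [T2Space X₁] [T2Space X₂] [CompletelyRegularSpace X₁] [CompletelyRegularSpace X₂]
    [MeasurableSpace X₁] [BorelSpace X₁] [MeasurableSpace X₂] [BorelSpace X₂]
    [Nonempty X₁] [Nonempty X₂]
    (p : ℝ) (hp : 1 ≤ p)
    (α : Measure (Cone X₁ × Cone X₂)) [IsFiniteMeasure α]
    (ϑ : Cone X₁ × Cone X₂ → ℝ≥0) (hmeas : Measurable ϑ) (hpos : ∀ y, 0 < ϑ y)
    (hLp : ∫⁻ y, (ϑ y : ℝ≥0∞) ^ p ∂α ≠ ⊤) :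
    homMarginalFst p (dil p ϑ α) = homMarginalFst p α ∧
      homMarginalSnd p (dil p ϑ α) = homMarginalSnd p α := by
  have hp0 : (0 : ℝ) ≤ p := le_trans zero_le_one hp
  set T : Cone X₁ × Cone X₂ → Cone X₁ × Cone X₂ :=
    fun y => (Cone.smul X₁ (ϑ y)⁻¹ y.1, Cone.smul X₂ (ϑ y)⁻¹ y.2) with hTdef
  have hT : Measurable T := measurable_dilMap ϑ hmeas
  have hϑp : Measurable fun y : Cone X₁ × Cone X₂ => (ϑ y : ℝ≥0∞) ^ p :=
    (hmeas.coe_nnreal_ennreal).pow_const p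
  -- density cancellation, first coordinate
  have hdens1 : (fun y : Cone X₁ × Cone X₂ =>
      (ϑ y : ℝ≥0∞) ^ p * (Cone.radius X₁ (T y).1 : ℝ≥0∞) ^ p) =
      fun y => (Cone.radius X₁ y.1 : ℝ≥0∞) ^ p := by
    funext y
    have hθ : (ϑ y : ℝ≥0) ≠ 0 := (hpos y).ne'
    rw [hTdef]
    simp only [Cone.radius_smul]
    rw [ENNReal.coe_mul, ENNReal.mul_rpow_of_nonneg _ _ hp0, ← mul_assoc,
      ← ENNReal.mul_rpow_of_nonneg _ _ hp0, ENNReal.coe_inv hθ,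
      ENNReal.mul_inv_cancel (by exact_mod_cast hθ) ENNReal.coe_ne_top,
      ENNReal.one_rpow, one_mul]
  have hdens2 : (fun y : Cone X₁ × Cone X₂ =>
      (ϑ y : ℝ≥0∞) ^ p * (Cone.radius X₂ (T y).2 : ℝ≥0∞) ^ p) =
      fun y => (Cone.radius X₂ y.2 : ℝ≥0∞) ^ p := by
    funext y
    have hθ : (ϑ y : ℝ≥0) ≠ 0 := (hpos y).ne'
    rw [hTdef]
    simp only [Cone.radius_smul]
    rw [ENNReal.coe_mul, ENNReal.mul_rpow_of_nonneg _ _ hp0, ← mul_assoc,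
      ← ENNReal.mul_rpow_of_nonneg _ _ hp0, ENNReal.coe_inv hθ,
      ENNReal.mul_inv_cancel (by exact_mod_cast hθ) ENNReal.coe_ne_top,
      ENNReal.one_rpow, one_mul]
  have hg₁ : Measurable fun y : Cone X₁ × Cone X₂ =>
      (Cone.radius X₁ y.1 : ℝ≥0∞) ^ p :=
    ((measurable_coe_nnreal_ennreal.comp
      ((Cone.continuous_radius.comp continuous_fst).measurable)).pow_const p)
  have hg₂ : Measurable fun y : Cone X₁ × Cone X₂ =>
      (Cone.radius X₂ y.2 : ℝ≥0∞) ^ p :=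
    ((measurable_coe_nnreal_ennreal.comp
      ((Cone.continuous_radius.comp continuous_snd).measurable)).pow_const p)
  have hb₁ : Measurable fun y : Cone X₁ × Cone X₂ => Cone.basePt X₁ y.1 :=
    Cone.measurable_basePt.comp continuous_fst.measurable
  have hb₂ : Measurable fun y : Cone X₁ × Cone X₂ => Cone.basePt X₂ y.2 :=
    Cone.measurable_basePt.comp continuous_snd.measurable
  -- generic step: withDensity of a mapped measure
  have key : ∀ (g : Cone X₁ × Cone X₂ → ℝ≥0∞), Measurable g →
      (Measure.map T (α.withDensity fun y => (ϑ y : ℝ≥0∞) ^ p)).withDensity g =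
        Measure.map T (α.withDensity fun y => (ϑ y : ℝ≥0∞) ^ p * g (T y)) := by
    intro g hg
    have hgT : Measurable fun y => g (T y) := hg.comp hT
    ext s hs
    rw [withDensity_apply _ hs, setLIntegral_map hs hg hT,
      Measure.map_apply hT hs, withDensity_apply _ (hT hs),
      setLIntegral_withDensity_eq_setLIntegral_mul _ hϑp hgT (hT hs)]
    rfl
  constructor
  · rw [homMarginalFst, homMarginalFst, dil]
    rw [key _ hg₁, hdens1,
      Measure.map_map hb₁ hT]
    congr 1
    funext y
    exact Cone.basePt_smul (inv_ne_zero (hpos y).ne') y.1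
  · rw [homMarginalSnd, homMarginalSnd, dil]
    rw [key _ hg₂, hdens2,
      Measure.map_map hb₂ hT]
    congr 1
    funext y
    exact Cone.basePt_smul (inv_ne_zero (hpos y).ne') y.2

end UOT
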